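/- Weight function of the orthogonal polynomials of A_3: Let z₁, z₂, z₃, z₄ be complex numbers of modulus 1 with z₁z₂z₃z₄ = 1, and let u₁, u₂, u₃ denote the first, second and third elementary symmetric functions of z₁, z₂, z₃, z₄. Then the product over all pairs 1 ≤ i < j ≤ 4 of |z_i − z_j|² equals 256 − 27u₁⁴ + 144u₁²u₂ − 128u₂² − 4u₁²u₂³ + 16u₂⁴ − 192u₁u₃ + 18u₁³u₂u₃ − 80u₁u₂²u₃ − 6u₁²u₃² + 144u₂u₃² + u₁²u₂²u₃² − 4u₂³u₃² − 4u₁³u₃³ + 18u₁u₂u₃³ − 27u₃⁴. -/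

import Mathlib

/-!
On the unit circle `conj z = z⁻¹`, so `|z - w|² = (z - w)(z⁻¹ - w⁻¹) = -(z - w)² / (z w)`.
Over the six pairs the signs cancel and the denominators multiply to `(z₁z₂z₃z₄)³ = 1`, so the
product is the Vandermonde square `∏_{i<j} (z_i - z_j)²`, i.e. the discriminant of the quartic
`∏ (X - z_i) = X⁴ - u₁X³ + u₂X² - u₃X + 1`, written out in its coefficients.
-/

/-- The discriminant of `X⁴ - e₁X³ + e₂X² - e₃X + e₄`. -/
def quarticDisc {R : Type*} [CommRing R] (e₁ e₂ e₃ e₄ : R) : R :=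
  256 * e₄ ^ 3 - 192 * e₁ * e₃ * e₄ ^ 2 - 128 * e₂ ^ 2 * e₄ ^ 2 + 144 * e₂ * e₃ ^ 2 * e₄
    - 27 * e₃ ^ 4 + 144 * e₁ ^ 2 * e₂ * e₄ ^ 2 - 6 * e₁ ^ 2 * e₃ ^ 2 * e₄
    - 80 * e₁ * e₂ ^ 2 * e₃ * e₄ + 18 * e₁ * e₂ * e₃ ^ 3 + 16 * e₂ ^ 4 * e₄ - 4 * e₂ ^ 3 * e₃ ^ 2
    - 27 * e₁ ^ 4 * e₄ ^ 2 + 18 * e₁ ^ 3 * e₂ * e₃ * e₄ - 4 * e₁ ^ 3 * e₃ ^ 3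
    - 4 * e₁ ^ 2 * e₂ ^ 3 * e₄ + e₁ ^ 2 * e₂ ^ 2 * e₃ ^ 2

theorem vandermonde_sq_eq_quarticDisc {R : Type*} [CommRing R] (a b c d : R) :
    ((a - b) * (a - c) * (a - d) * (b - c) * (b - d) * (c - d)) ^ 2 =
      quarticDisc (a + b + c + d) (a * b + a * c + a * d + b * c + b * d + c * d)
        (a * b * c + a * b * d + a * c * d + b * c * d) (a * b * c * d) := by
  unfold quarticDisc
  ring

theorem Complex.ofReal_norm_sub_sq_of_norm_eq_one {z w : ℂ} (hz : ‖z‖ = 1) (hw : ‖w‖ = 1) :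
    ((‖z - w‖ ^ 2 : ℝ) : ℂ) = -(z - w) ^ 2 / (z * w) := by
  have hz₀ : z ≠ 0 := norm_ne_zero_iff.mp (hz ▸ one_ne_zero)
  have hw₀ : w ≠ 0 := norm_ne_zero_iff.mp (hw ▸ one_ne_zero)
  rw [Complex.ofReal_pow, ← Complex.mul_conj', map_sub, ← Complex.inv_eq_conj hz,
    ← Complex.inv_eq_conj hw]
  field_simp
  ring

theorem A3_weight_function (z₁ z₂ z₃ z₄ u₁ u₂ u₃ : ℂ)
    (h₁ : ‖z₁‖ = 1) (h₂ : ‖z₂‖ = 1) (h₃ : ‖z₃‖ = 1)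
    (h₄ : ‖z₄‖ = 1) (hprod : z₁ * z₂ * z₃ * z₄ = 1)
    (hu₁ : u₁ = z₁ + z₂ + z₃ + z₄)
    (hu₂ : u₂ = z₁ * z₂ + z₁ * z₃ + z₁ * z₄ + z₂ * z₃ + z₂ * z₄ + z₃ * z₄)
    (hu₃ : u₃ = z₁ * z₂ * z₃ + z₁ * z₂ * z₄ + z₁ * z₃ * z₄ + z₂ * z₃ * z₄) :
    ((‖z₁ - z₂‖ ^ 2 * ‖z₁ - z₃‖ ^ 2 *
        ‖z₁ - z₄‖ ^ 2 * ‖z₂ - z₃‖ ^ 2 *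
        ‖z₂ - z₄‖ ^ 2 * ‖z₃ - z₄‖ ^ 2 : ℝ) : ℂ) =
      256 - 27 * u₁ ^ 4 + 144 * u₁ ^ 2 * u₂ - 128 * u₂ ^ 2 - 4 * u₁ ^ 2 * u₂ ^ 3
        + 16 * u₂ ^ 4 - 192 * u₁ * u₃ + 18 * u₁ ^ 3 * u₂ * u₃ - 80 * u₁ * u₂ ^ 2 * u₃
        - 6 * u₁ ^ 2 * u₃ ^ 2 + 144 * u₂ * u₃ ^ 2 + u₁ ^ 2 * u₂ ^ 2 * u₃ ^ 2
        - 4 * u₂ ^ 3 * u₃ ^ 2 - 4 * u₁ ^ 3 * u₃ ^ 3 + 18 * u₁ * u₂ * u₃ ^ 3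
        - 27 * u₃ ^ 4 := by
  have hnorm := @Complex.ofReal_norm_sub_sq_of_norm_eq_one
  calc _ = ((z₁ - z₂) * (z₁ - z₃) * (z₁ - z₄) * (z₂ - z₃) * (z₂ - z₄) * (z₃ - z₄)) ^ 2
          / (z₁ * z₂ * z₃ * z₄) ^ 3 := by
        simp only [Complex.ofReal_mul]
        rw [hnorm h₁ h₂, hnorm h₁ h₃, hnorm h₁ h₄, hnorm h₂ h₃, hnorm h₂ h₄, hnorm h₃ h₄]
        ring
    _ = quarticDisc u₁ u₂ u₃ 1 := by
        rw [vandermonde_sq_eq_quarticDisc, hprod, hu₁, hu₂, hu₃, one_pow, div_one]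
    _ = _ := by
        unfold quarticDisc
        ring
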